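/- Let r be a positive integer and e_1,...,e_r integers. Suppose that for every permutation s ∈ S_r, Φ_{e_{s(1)},...,e_{s(r)}}(x) = x as rational functions. Then e_1 = e_2 = ... = e_r and e_1 ∈ {-1, 0, 1}. -/

import Mathlib

/-!
Each `Φ` is a product of the matrices `A(e) = !![0, 1; -1, e]`, all of determinant `1`.
Comparing the continued fractions of a permutation `s` and of `s ∘ (0 1)` and cancelling the
common invertible left factor, `A(b) A(a)` and `A(a) A(b)` are proportional, which forces
`a = b`; hence all the `eᵢ` agree. Then `A(a)^r` is scalar, but its off-diagonal entry is the
Lucas sequence `U_r(a, 1)`, which grows strictly in absolute value when `|a| ≥ 2`.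
-/

open Matrix

/-- The 2×2 matrix of the Möbius transformation `x ↦ 1/(e - x)`. -/
noncomputable def mobA (e : ℂ) : Matrix (Fin 2) (Fin 2) ℂ := !![0, 1; -1, e]

/-- The matrix of the continued fraction Möbius transformation
`Φ_{e₁,…,e_r}(x) = 1/(e_r - 1/(e_{r-1} - ⋯ - 1/(e₁ - x)))`, for the list `[e₁, …, e_r]`. -/
noncomputable def phiL (l : List ℂ) : Matrix (Fin 2) (Fin 2) ℂ :=
  l.foldl (fun M e => mobA e * M) 1

/-- `M` and `N` define the same Möbius transformation (equality as rational functions). -/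
def MobiusEq (M N : Matrix (Fin 2) (Fin 2) ℂ) : Prop := ∃ c : ℂ, c ≠ 0 ∧ M = c • N

/-- `M` defines the identity Möbius transformation `x ↦ x`. -/
def IsMobiusId (M : Matrix (Fin 2) (Fin 2) ℂ) : Prop := MobiusEq M 1

theorem phiL_eq_prod (l : List ℂ) : phiL l = (l.map mobA).reverse.prod := by
  suffices ∀ X, l.foldl (fun M e => mobA e * M) X = (l.map mobA).reverse.prod * X from
    (this 1).trans (mul_one _)
  induction l with
  | nil => simp
  | cons a l ih => intro X; simp [ih, mul_assoc]

theorem phiL_cons (a : ℂ) (l : List ℂ) : phiL (a :: l) = phiL l * mobA a := by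
  simp [phiL_eq_prod]

theorem phiL_replicate (n : ℕ) (a : ℂ) : phiL (List.replicate n a) = mobA a ^ n := by
  simp [phiL_eq_prod]

theorem isUnit_mobA (e : ℂ) : IsUnit (mobA e) := by
  simp [Matrix.isUnit_iff_isUnit_det, mobA, Matrix.det_fin_two_of]

theorem isUnit_phiL (l : List ℂ) : IsUnit (phiL l) := by
  rw [phiL_eq_prod]
  exact List.prod_isUnit fun M hM => by
    obtain ⟨e, -, rfl⟩ := List.mem_map.mp (List.mem_reverse.mp hM)
    exact isUnit_mobA e

theorem mobA_mul_mobA (a b : ℂ) : mobA a * mobA b = !![-1, b; -a, a * b - 1] := by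
  ext i j
  fin_cases i <;> fin_cases j <;> simp [mobA, Matrix.mul_apply, Fin.sum_univ_two]; ring

namespace MobiusEq

variable {M N P : Matrix (Fin 2) (Fin 2) ℂ}

theorem symm (h : MobiusEq M N) : MobiusEq N M := by
  obtain ⟨c, hc, rfl⟩ := h
  exact ⟨c⁻¹, inv_ne_zero hc, by rw [smul_smul, inv_mul_cancel₀ hc, one_smul]⟩

theorem trans (h₁ : MobiusEq M N) (h₂ : MobiusEq N P) : MobiusEq M P := by
  obtain ⟨c, hc, rfl⟩ := h₁
  obtain ⟨d, hd, rfl⟩ := h₂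
  exact ⟨c * d, mul_ne_zero hc hd, smul_smul c d P⟩

theorem of_mul_left (hP : IsUnit P) (h : MobiusEq (P * M) (P * N)) : MobiusEq M N := by
  obtain ⟨c, hc, hMN⟩ := h
  exact ⟨c, hc, hP.mul_left_cancel (by rw [hMN, Matrix.mul_smul])⟩

end MobiusEq

theorem eq_of_mobiusEq_mobA_mul_mobA {a b : ℂ}
    (h : MobiusEq (mobA b * mobA a) (mobA a * mobA b)) : a = b := by
  obtain ⟨c, -, hc⟩ := h
  rw [mobA_mul_mobA, mobA_mul_mobA, ← Matrix.ext_iff] at hc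
  have h₀₀ := hc 0 0
  have h₀₁ := hc 0 1
  simp only [Matrix.smul_apply, Matrix.of_apply, Matrix.cons_val', Matrix.cons_val_zero,
    Matrix.cons_val_one, Matrix.empty_val', Matrix.cons_val_fin_one, smul_eq_mul] at h₀₀ h₀₁
  obtain rfl : c = 1 := by linear_combination h₀₀
  simpa using h₀₁

theorem eq_of_isMobiusId_phiL_cons_cons {a b : ℂ} {l : List ℂ}
    (hab : IsMobiusId (phiL (a :: b :: l))) (hba : IsMobiusId (phiL (b :: a :: l))) :
    a = b := by
  rw [phiL_cons, phiL_cons, mul_assoc] at hab hba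
  exact eq_of_mobiusEq_mobA_mul_mobA ((hab.trans hba.symm).of_mul_left (isUnit_phiL l))

theorem apply_zero_eq_apply_one_of_isMobiusId {n : ℕ} (f : Fin (n + 2) → ℂ)
    (hf : IsMobiusId (phiL (List.ofFn f)))
    (hf' : IsMobiusId (phiL (List.ofFn (f ∘ Equiv.swap 0 1)))) :
    f 0 = f 1 := by
  have hswap (k : Fin n) : Equiv.swap (0 : Fin (n + 2)) 1 k.succ.succ = k.succ.succ :=
    Equiv.swap_apply_of_ne_of_ne (Fin.succ_ne_zero _) (Fin.succ_succ_ne_one _)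
  simp only [List.ofFn_succ, Function.comp_apply, Fin.succ_zero_eq_one, hswap,
    Equiv.swap_apply_left, Equiv.swap_apply_right] at hf hf'
  exact eq_of_isMobiusId_phiL_cons_cons hf hf'

theorem forall_eq_of_forall_perm_isMobiusId {r : ℕ} (f : Fin r → ℂ)
    (hf : ∀ s : Equiv.Perm (Fin r), IsMobiusId (phiL (List.ofFn (f ∘ s)))) (i j : Fin r) :
    f i = f j := by
  rcases eq_or_ne i j with rfl | hij
  · rfl
  obtain ⟨n, rfl⟩ : ∃ n, r = n + 2 := ⟨r - 2, by have := i.2; have := j.2; omega⟩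
  obtain ⟨s, hs₀, hs₁⟩ := MulAction.is_two_pretransitive_iff.mp
    (Equiv.Perm.isMultiplyPretransitive (Fin (n + 2)) 2) Fin.zero_ne_one hij
  rw [← hs₀, ← hs₁]
  have hf' := hf (s * Equiv.swap 0 1)
  rw [Equiv.Perm.coe_mul, ← Function.comp_assoc] at hf'
  exact apply_zero_eq_apply_one_of_isMobiusId (f ∘ s) (hf s) hf'

def lucasU (a : ℤ) : ℕ → ℤ
  | 0 => 0
  | 1 => 1
  | n + 2 => a * lucasU a (n + 1) - lucasU a n

theorem mobA_pow_succ (a : ℤ) (n : ℕ) :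
    mobA a ^ (n + 1) = !![-(lucasU a n : ℂ), lucasU a (n + 1); -lucasU a (n + 1),
      lucasU a (n + 2)] := by
  induction n with
  | zero =>
    ext i j
    fin_cases i <;> fin_cases j <;> simp [mobA, lucasU]
  | succ n ih =>
    rw [pow_succ, ih]
    ext i j
    fin_cases i <;> fin_cases j <;>
      simp [mobA, Matrix.mul_apply, Fin.sum_univ_two, lucasU] <;> ring

theorem abs_lucasU_lt_abs_lucasU_succ {a : ℤ} (ha : 2 ≤ |a|) (n : ℕ) :
    |lucasU a n| < |lucasU a (n + 1)| := by
  induction n with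
  | zero => simp [lucasU]
  | succ n ih =>
    have h_tri := abs_sub_abs_le_abs_sub (a * lucasU a (n + 1)) (lucasU a n)
    have h_mul : 2 * |lucasU a (n + 1)| ≤ |a * lucasU a (n + 1)| := by
      rw [abs_mul]
      exact mul_le_mul_of_nonneg_right ha (abs_nonneg _)
    change _ < |a * lucasU a (n + 1) - lucasU a n|
    linarith

theorem lucasU_ne_zero {a : ℤ} (ha : 2 ≤ |a|) {n : ℕ} (hn : n ≠ 0) : lucasU a n ≠ 0 := by
  have h_mono : StrictMono fun n => |lucasU a n| :=
    strictMono_nat_of_lt_succ (abs_lucasU_lt_abs_lucasU_succ ha)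
  have := h_mono (Nat.pos_of_ne_zero hn)
  simp only [lucasU, abs_zero] at this
  exact abs_pos.mp this

theorem abs_le_one_of_isMobiusId_mobA_pow {a : ℤ} {n : ℕ} (hn : n ≠ 0)
    (h : IsMobiusId (mobA a ^ n)) : |a| ≤ 1 := by
  by_contra! ha
  obtain ⟨m, rfl⟩ := Nat.exists_eq_add_one_of_ne_zero hn
  obtain ⟨c, -, hc⟩ := h
  have h₀₁ := congrFun₂ hc 0 1
  simp only [mobA_pow_succ, of_apply, cons_val', cons_val_one, cons_val_fin_one, cons_val_zero,
    Matrix.smul_apply, one_apply_ne zero_ne_one, smul_eq_mul, mul_zero, Int.cast_eq_zero] at h₀₁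
  exact lucasU_ne_zero (a := a) (by omega) m.succ_ne_zero h₀₁

theorem stmt_7_general (r : ℕ) (e : Fin r → ℤ)
    (h : ∀ s : Equiv.Perm (Fin r),
      IsMobiusId (phiL (List.ofFn fun i => ((e (s i) : ℤ) : ℂ)))) :
    (∀ i j, e i = e j) ∧ ∀ i, e i ∈ ({-1, 0, 1} : Set ℤ) := by
  have h_eq (i j : Fin r) : e i = e j := by
    exact_mod_cast forall_eq_of_forall_perm_isMobiusId (fun i => (e i : ℂ)) h i j
  refine ⟨h_eq, fun i => ?_⟩
  have h_id := h 1
  simp only [Equiv.Perm.one_apply, h_eq _ i, List.ofFn_const, phiL_replicate] at h_id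
  have := abs_le.mp (abs_le_one_of_isMobiusId_mobA_pow (Fin.pos i).ne' h_id)
  simp only [Set.mem_insert_iff, Set.mem_singleton_iff]
  omega

/-- Let `r ≥ 1` and `e₁,…,e_r` integers.  If `Φ_{e_{s(1)},…,e_{s(r)}}(x) = x` as rational
functions for every permutation `s ∈ S_r`, then `e₁ = ⋯ = e_r` and `e₁ ∈ {-1, 0, 1}`. -/
theorem stmt_7 (r : ℕ) (hr : 1 ≤ r) (e : Fin r → ℤ)
    (h : ∀ s : Equiv.Perm (Fin r),
      IsMobiusId (phiL (List.ofFn fun i => ((e (s i) : ℤ) : ℂ)))) :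
    (∀ i j, e i = e j) ∧ ∀ i, e i ∈ ({-1, 0, 1} : Set ℤ) :=
  stmt_7_general r e h
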